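/- arXiv:2305.12742 — 5 statements merged into one kernel-verified Lean document; each statement's English description precedes it below -/
import Mathlib

section
/- For all bicomplex numbers Z and W one has ‖Z·W‖ ≤ √2·‖Z‖·‖W‖, and this inequality is sharp: for Z = W = e₁ = (1/2, −i/2) one has ‖e₁·e₁‖ = √2·‖e₁‖·‖e₁‖. -/
open Complex Matrix Kronecker BigOperators

open scoped ComplexOrder

/-- Bicomplex numbers, modeled as pairs `(z₁, z₂) ∈ ℂ × ℂ` representing `z₁ + j z₂`.
Addition is the componentwise (Prod) addition. -/
abbrev BC : Type := ℂ × ℂ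

noncomputable section

/-- Bicomplex multiplication: `(z₁,z₂)·(w₁,w₂) = (z₁w₁ − z₂w₂, z₁w₂ + z₂w₁)`. -/
def bcMul (z w : BC) : BC := (z.1 * w.1 - z.2 * w.2, z.1 * w.2 + z.2 * w.1)

/-- The `*`-conjugate `Z* = conj z₁ − j conj z₂`. -/
def bcStar (z : BC) : BC := ((starRingEnd ℂ) z.1, -((starRingEnd ℂ) z.2))

/-- First idempotent component `λ₁ = z₁ − i z₂`. -/
def idem1 (z : BC) : ℂ := z.1 - Complex.I * z.2

/-- Second idempotent component `λ₂ = z₁ + i z₂`. -/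
def idem2 (z : BC) : ℂ := z.1 + Complex.I * z.2

/-- Membership in `𝔻⁺`: both idempotent components are nonnegative real numbers. -/
def inDplus (z : BC) : Prop :=
  (idem1 z).im = 0 ∧ 0 ≤ (idem1 z).re ∧ (idem2 z).im = 0 ∧ 0 ≤ (idem2 z).re

/-- A bicomplex matrix `A = A₁ + j A₂` is a pair of complex matrices. -/
abbrev BCMat (I J : Type) : Type := Matrix I J ℂ × Matrix I J ℂ

/-- Bicomplex matrix multiplication, induced by bicomplex multiplication. -/
def bmul {I J K : Type} [Fintype J] (A : BCMat I J) (B : BCMat J K) : BCMat I K :=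
  (A.1 * B.1 - A.2 * B.2, A.1 * B.2 + A.2 * B.1)

/-- `(A*)ᵗ`: the entrywise `*`-conjugate followed by transpose. -/
def bcStarT {I J : Type} (A : BCMat I J) : BCMat J I := (A.1ᴴ, -(A.2ᴴ))

/-- The `(j,k)` entry of a bicomplex matrix, as a bicomplex number. -/
def bcEntry {I J : Type} (A : BCMat I J) (j : I) (k : J) : BC := (A.1 j k, A.2 j k)

/-- First idempotent component `𝒜₁ = A₁ − i A₂` of a bicomplex matrix. -/
def midem1 {I J : Type} (A : BCMat I J) : Matrix I J ℂ := A.1 - Complex.I • A.2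

/-- Second idempotent component `𝒜₂ = A₁ + i A₂` of a bicomplex matrix. -/
def midem2 {I J : Type} (A : BCMat I J) : Matrix I J ℂ := A.1 + Complex.I • A.2

/-- The bicomplex number `(c*)ᵗ · A · c`. -/
def quadForm {I : Type} [Fintype I] (A : BCMat I I) (c : I → BC) : BC :=
  ∑ j, ∑ k, bcMul (bcStar (c j)) (bcMul (bcEntry A j k) (c k))

/-- `A` is hyperbolic positive if `(c*)ᵗ · A · c ∈ 𝔻⁺` for every bicomplex vector `c`. -/
def HypPos {I : Type} [Fintype I] (A : BCMat I I) : Prop :=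
  ∀ c : I → BC, inDplus (quadForm A c)

/-- Bicomplex trace `Tr(A) = Tr(A₁) + j Tr(A₂)`. -/
def bcTrace {I : Type} [Fintype I] (A : BCMat I I) : BC := (A.1.trace, A.2.trace)

/-- The bicomplex tensor product
`A ⊗ⱼ B = (A₁⊗B₁ − A₂⊗B₂) + j (A₁⊗B₂ + A₂⊗B₁)`. -/
def bkron {I J K L : Type} (A : BCMat I J) (B : BCMat K L) : BCMat (I × K) (J × L) :=
  (A.1 ⊗ₖ B.1 - A.2 ⊗ₖ B.2, A.1 ⊗ₖ B.2 + A.2 ⊗ₖ B.1)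

end

noncomputable section

/-- The Euclidean norm `‖Z‖ = √(|z₁|² + |z₂|²)` of a bicomplex number. -/
def bcNorm (z : BC) : ℝ := Real.sqrt (‖z.1‖ ^ 2 + ‖z.2‖ ^ 2)

/-!
In idempotent coordinates `λ₁ = z₁ − i z₂`, `λ₂ = z₁ + i z₂` bicomplex multiplication is
componentwise, and by the parallelogram law `2‖Z‖² = |λ₁|² + |λ₂|²`. Hence
`2‖ZW‖² = |λ₁μ₁|² + |λ₂μ₂|² ≤ (|λ₁|² + |λ₂|²)(|μ₁|² + |μ₂|²) = 4‖Z‖²‖W‖²`, with equality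
when one idempotent coordinate of both `Z` and `W` vanishes; `e₁` has coordinates `(0, 1)`.
-/

theorem bcNorm_nonneg (z : BC) : 0 ≤ bcNorm z := Real.sqrt_nonneg _

theorem bcNorm_sq (z : BC) : bcNorm z ^ 2 = ‖z.1‖ ^ 2 + ‖z.2‖ ^ 2 :=
  Real.sq_sqrt (by positivity)

theorem idem1_bcMul (z w : BC) : idem1 (bcMul z w) = idem1 z * idem1 w := by
  simp only [idem1, bcMul]
  linear_combination (-(z.2 * w.2)) * Complex.I_sq

theorem idem2_bcMul (z w : BC) : idem2 (bcMul z w) = idem2 z * idem2 w := by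
  simp only [idem2, bcMul]
  linear_combination (-(z.2 * w.2)) * Complex.I_sq

theorem two_mul_bcNorm_sq (z : BC) : 2 * bcNorm z ^ 2 = ‖idem1 z‖ ^ 2 + ‖idem2 z‖ ^ 2 := by
  rw [bcNorm_sq, idem1, idem2, add_comm (‖_ - _‖ ^ 2), parallelogram_law_with_norm ℝ,
    norm_mul, Complex.norm_I, one_mul]

theorem bcNorm_mul_le (z w : BC) : bcNorm (bcMul z w) ≤ √2 * (bcNorm z * bcNorm w) := by
  have hsq : 2 * bcNorm (bcMul z w) ^ 2 ≤ 2 * (√2 * (bcNorm z * bcNorm w)) ^ 2 :=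
    calc 2 * bcNorm (bcMul z w) ^ 2
        = (‖idem1 z‖ * ‖idem1 w‖) ^ 2 + (‖idem2 z‖ * ‖idem2 w‖) ^ 2 := by
          rw [two_mul_bcNorm_sq, idem1_bcMul, idem2_bcMul, norm_mul, norm_mul]
      _ ≤ (‖idem1 z‖ ^ 2 + ‖idem2 z‖ ^ 2) * (‖idem1 w‖ ^ 2 + ‖idem2 w‖ ^ 2) := by
          nlinarith [sq_nonneg (‖idem1 z‖ * ‖idem2 w‖), sq_nonneg (‖idem2 z‖ * ‖idem1 w‖)]
      _ = 2 * (√2 * (bcNorm z * bcNorm w)) ^ 2 := by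
          rw [← two_mul_bcNorm_sq, ← two_mul_bcNorm_sq, mul_pow, mul_pow,
            Real.sq_sqrt zero_le_two]
          ring
  have hnonneg : 0 ≤ √2 * (bcNorm z * bcNorm w) :=
    mul_nonneg (Real.sqrt_nonneg _) (mul_nonneg (bcNorm_nonneg z) (bcNorm_nonneg w))
  exact (sq_le_sq₀ (bcNorm_nonneg _) hnonneg).1 (le_of_mul_le_mul_left hsq two_pos)

theorem bcMul_e₁_self :
    bcMul ((1 / 2 : ℂ), -(Complex.I / 2)) ((1 / 2 : ℂ), -(Complex.I / 2)) =
      ((1 / 2 : ℂ), -(Complex.I / 2)) := by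
  refine Prod.ext ?_ ?_ <;> simp only [bcMul]
  · linear_combination (-1 / 4 : ℂ) * Complex.I_sq
  · ring

theorem bcNorm_e₁ : bcNorm ((1 / 2 : ℂ), -(Complex.I / 2)) = √2 / 2 := by
  rw [bcNorm, norm_neg, norm_div, norm_div, Complex.norm_I, norm_one, Complex.norm_two,
    show (1 / 2 : ℝ) ^ 2 + (1 / 2) ^ 2 = 2 / 2 ^ 2 by norm_num, Real.sqrt_div zero_le_two,
    Real.sqrt_sq zero_le_two]

/-- `‖Z·W‖ ≤ √2 ‖Z‖ ‖W‖`, with equality for `Z = W = e₁ = (1/2, −i/2)`. -/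
theorem bc_norm_mul_le :
    (∀ Z W : BC, bcNorm (bcMul Z W) ≤ Real.sqrt 2 * (bcNorm Z * bcNorm W)) ∧
    (bcNorm (bcMul ((1 / 2 : ℂ), -(Complex.I / 2)) ((1 / 2 : ℂ), -(Complex.I / 2))) =
      Real.sqrt 2 * (bcNorm ((1 / 2 : ℂ), -(Complex.I / 2)) *
        bcNorm ((1 / 2 : ℂ), -(Complex.I / 2)))) := by
  refine ⟨bcNorm_mul_le, ?_⟩
  rw [bcMul_e₁_self, bcNorm_e₁]
  linear_combination (-(√2) / 4) * Real.mul_self_sqrt (zero_le_two (α := ℝ))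

end
end

section
/- A bicomplex matrix A ∈ 𝔹ℂ^{n×n} with idempotent components 𝒜₁, 𝒜₂ ∈ ℂ^{n×n} is a state (i.e. hyperbolic positive with Tr(A) = 1) if and only if 𝒜₁ and 𝒜₂ are complex states, i.e. positive semidefinite complex matrices with Tr(𝒜₁) = Tr(𝒜₂) = 1. -/
/-! The idempotent components are evaluations of `z₁ + j z₂` at the two square roots
`j = ∓i` of `-1`. Each such evaluation is multiplicative and turns the `*`-conjugate into
complex conjugation, so it carries `(c*)ᵗ A c` to the complex quadratic form of `𝒜₁` resp. `𝒜₂`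
at the evaluated vector. Every complex vector arises this way (take `c = x + j 0`), so `A` is
hyperbolic positive iff both quadratic forms are nonnegative, i.e. iff `𝒜₁, 𝒜₂` are positive
semidefinite. The trace condition splits likewise, since a bicomplex number is determined by its
two idempotent components. -/

open Complex Matrix Kronecker BigOperators

open scoped ComplexOrder

open ComplexConjugate

-- Over `ℂ` no Hermitian hypothesis is needed: a real-valued quadratic form forces `M = Mᴴ`.
theorem Matrix.posSemidef_iff_forall_dotProduct_mulVec_nonneg {ι : Type*} [Fintype ι]
    (M : Matrix ι ι ℂ) : M.PosSemidef ↔ ∀ x : ι → ℂ, 0 ≤ star x ⬝ᵥ (M *ᵥ x) := by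
  classical
  refine ⟨PosSemidef.dotProduct_mulVec_nonneg, fun h => .of_dotProduct_mulVec_nonneg ?_ h⟩
  rw [← isSymmetric_toEuclideanLin_iff, LinearMap.isSymmetric_iff_inner_map_self_real]
  intro v
  rw [conj_eq_iff_im, EuclideanSpace.inner_eq_star_dotProduct, dotProduct_star, dotProduct_comm,
    Complex.star_def, Complex.conj_im, neg_eq_zero]
  simpa using (Complex.nonneg_iff.mp (h v)).2.symm

def bcEval (ε : ℂ) (z : BC) : ℂ := z.1 + ε * z.2

lemma idem1_eq_bcEval (z : BC) : idem1 z = bcEval (-I) z := by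
  rw [idem1, bcEval, neg_mul, sub_eq_add_neg]

lemma idem2_eq_bcEval (z : BC) : idem2 z = bcEval I z := rfl

lemma midem1_eq_add_smul {ι κ : Type} (A : BCMat ι κ) : midem1 A = A.1 + (-I) • A.2 := by
  rw [midem1, neg_smul, sub_eq_add_neg]

lemma midem2_eq_add_smul {ι κ : Type} (A : BCMat ι κ) : midem2 A = A.1 + I • A.2 := rfl

section

variable {ε : ℂ}

lemma bcEval_bcMul (hε : ε * ε = -1) (z w : BC) :
    bcEval ε (bcMul z w) = bcEval ε z * bcEval ε w := by
  simp only [bcEval, bcMul]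
  linear_combination (-(z.2 * w.2)) * hε

lemma bcEval_bcStar (hε : conj ε = -ε) (z : BC) :
    bcEval ε (bcStar z) = conj (bcEval ε z) := by
  simp only [bcEval, bcStar, map_add, map_mul, hε]
  ring

lemma bcEval_sum {ι : Type*} (s : Finset ι) (f : ι → BC) :
    bcEval ε (∑ i ∈ s, f i) = ∑ i ∈ s, bcEval ε (f i) := by
  simp [bcEval, Prod.fst_sum, Prod.snd_sum, Finset.mul_sum, Finset.sum_add_distrib]

lemma bcEval_quadForm (hε : ε * ε = -1) (hε' : conj ε = -ε) {ι : Type} [Fintype ι]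
    (A : BCMat ι ι) (c : ι → BC) :
    bcEval ε (quadForm A c) = star (bcEval ε ∘ c) ⬝ᵥ ((A.1 + ε • A.2) *ᵥ (bcEval ε ∘ c)) := by
  simp only [quadForm, bcEval_sum, bcEval_bcMul hε, bcEval_bcStar hε', dotProduct, mulVec,
    Finset.mul_sum]
  rfl

theorem posSemidef_iff_forall_bcEval_quadForm_nonneg (hε : ε * ε = -1) (hε' : conj ε = -ε)
    {ι : Type} [Fintype ι] (A : BCMat ι ι) :
    (A.1 + ε • A.2).PosSemidef ↔ ∀ c : ι → BC, 0 ≤ bcEval ε (quadForm A c) := by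
  simp only [posSemidef_iff_forall_dotProduct_mulVec_nonneg, bcEval_quadForm hε hε']
  exact ⟨fun h c => h _, fun h x => by simpa [bcEval, Function.comp_def] using h fun j => (x j, 0)⟩

end

lemma inDplus_iff (z : BC) : inDplus z ↔ 0 ≤ idem1 z ∧ 0 ≤ idem2 z := by
  simp only [inDplus, Complex.nonneg_iff, eq_comm (a := (0 : ℝ))]
  tauto

theorem hypPos_iff_posSemidef {ι : Type} [Fintype ι] (A : BCMat ι ι) :
    HypPos A ↔ (midem1 A).PosSemidef ∧ (midem2 A).PosSemidef := by
  rw [midem1_eq_add_smul, midem2_eq_add_smul,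
    posSemidef_iff_forall_bcEval_quadForm_nonneg (by simp) (by simp),
    posSemidef_iff_forall_bcEval_quadForm_nonneg (by simp) (by simp), ← forall_and]
  simp only [HypPos, inDplus_iff, idem1_eq_bcEval, idem2_eq_bcEval]

lemma bc_ext_iff_idem {z w : BC} : z = w ↔ idem1 z = idem1 w ∧ idem2 z = idem2 w := by
  refine ⟨fun h => h ▸ ⟨rfl, rfl⟩, fun ⟨h₁, h₂⟩ => ?_⟩
  simp only [idem1, idem2] at h₁ h₂
  have h₃ : I * (z.2 - w.2) = 0 := by linear_combination (h₂ - h₁) / 2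
  exact Prod.ext (by linear_combination (h₁ + h₂) / 2)
    (sub_eq_zero.mp ((mul_eq_zero.mp h₃).resolve_left I_ne_zero))

lemma idem1_bcTrace {ι : Type} [Fintype ι] (A : BCMat ι ι) :
    idem1 (bcTrace A) = (midem1 A).trace := by
  simp [idem1, bcTrace, midem1, trace_sub, trace_smul]

lemma idem2_bcTrace {ι : Type} [Fintype ι] (A : BCMat ι ι) :
    idem2 (bcTrace A) = (midem2 A).trace := by
  simp [idem2, bcTrace, midem2, trace_add, trace_smul]

/-- `A` is a bicomplex state (hyperbolic positive with trace `1`)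
iff both idempotent components are complex states. -/
theorem bc_state_iff {n : ℕ} (A : BCMat (Fin n) (Fin n)) :
    (HypPos A ∧ bcTrace A = ((1 : ℂ), (0 : ℂ))) ↔
      ((midem1 A).PosSemidef ∧ (midem2 A).PosSemidef ∧
        (midem1 A).trace = 1 ∧ (midem2 A).trace = 1) := by
  rw [hypPos_iff_posSemidef, bc_ext_iff_idem, idem1_bcTrace, idem2_bcTrace]
  simp [idem1, idem2, and_assoc]
end

section
/- Let A ∈ 𝔹ℂ^{n×n} and B ∈ 𝔹ℂ^{m×m} be invertible bicomplex matrices. Then A ⊗ⱼ B is invertible and (A ⊗ⱼ B)⁻¹ = A⁻¹ ⊗ⱼ B⁻¹. -/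
open Complex Matrix Kronecker BigOperators

open scoped ComplexOrder

noncomputable section

lemma sub_kron {l m p q : Type} (A A' : Matrix l m ℂ) (B : Matrix p q ℂ) :
    (A - A') ⊗ₖ B = A ⊗ₖ B - A' ⊗ₖ B := by
  ext ⟨i, k⟩ ⟨j, r⟩
  simp [Matrix.kroneckerMap_apply, Matrix.sub_apply, sub_mul]

lemma kron_sub {l m p q : Type} (A : Matrix l m ℂ) (B B' : Matrix p q ℂ) :
    A ⊗ₖ (B - B') = A ⊗ₖ B - A ⊗ₖ B' := by
  ext ⟨i, k⟩ ⟨j, r⟩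
  simp [Matrix.kroneckerMap_apply, Matrix.sub_apply, mul_sub]

lemma bmul_bkron {n m : ℕ} (A A' : BCMat (Fin n) (Fin n)) (B B' : BCMat (Fin m) (Fin m)) :
    bmul (bkron A B) (bkron A' B') = bkron (bmul A A') (bmul B B') := by
  simp only [bmul, bkron, Prod.mk.injEq, Matrix.sub_mul, Matrix.mul_sub, Matrix.add_mul,
    Matrix.mul_add, Matrix.mul_kronecker_mul, sub_kron, kron_sub,
    Matrix.add_kronecker, Matrix.kronecker_add]
  constructor <;> abel

/-- if `A` and `B` are invertible bicomplex matrices then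
`A ⊗ⱼ B` is invertible with inverse `A⁻¹ ⊗ⱼ B⁻¹`. -/
theorem bkron_inv {n m : ℕ} (A A' : BCMat (Fin n) (Fin n)) (B B' : BCMat (Fin m) (Fin m))
    (hA1 : bmul A A' = ((1 : Matrix (Fin n) (Fin n) ℂ), (0 : Matrix (Fin n) (Fin n) ℂ)))
    (hA2 : bmul A' A = ((1 : Matrix (Fin n) (Fin n) ℂ), (0 : Matrix (Fin n) (Fin n) ℂ)))
    (hB1 : bmul B B' = ((1 : Matrix (Fin m) (Fin m) ℂ), (0 : Matrix (Fin m) (Fin m) ℂ)))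
    (hB2 : bmul B' B = ((1 : Matrix (Fin m) (Fin m) ℂ), (0 : Matrix (Fin m) (Fin m) ℂ))) :
    bmul (bkron A B) (bkron A' B') =
      ((1 : Matrix (Fin n × Fin m) (Fin n × Fin m) ℂ),
       (0 : Matrix (Fin n × Fin m) (Fin n × Fin m) ℂ)) ∧
    bmul (bkron A' B') (bkron A B) =
      ((1 : Matrix (Fin n × Fin m) (Fin n × Fin m) ℂ),
       (0 : Matrix (Fin n × Fin m) (Fin n × Fin m) ℂ)) := by
  constructor
  · rw [bmul_bkron, hA1, hB1]
    simp [bkron]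
  · rw [bmul_bkron, hA2, hB2]
    simp [bkron]

end
end

section
/- Let φ : 𝔹ℂ^{n×n} → 𝔹ℂ^{m×m} be a 𝔹ℂ-linear completely hyperbolic positive map. Then there exist r ∈ ℕ and bicomplex matrices V₁, …, V_r ∈ 𝔹ℂ^{m×n} such that φ(A) = Σ_{i=1}^{r} Vᵢ·A·(Vᵢ*)ᵗ for all A ∈ 𝔹ℂ^{n×n} (a bicomplex Kraus decomposition; i.e. φ is a finite bicomplex quantum channel). -/
/-!
In the idempotent decomposition `A = 𝒜₁ e₁ + 𝒜₂ e₂` the bicomplex product and `(·*)ᵗ` act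
componentwise as the complex product and conjugate transpose, and `A` is hyperbolic positive iff
`𝒜₁` and `𝒜₂` are positive semidefinite. A `𝔹ℂ`-linear `φ` therefore acts on the components
through two complex-linear maps `ψ₁, ψ₂`. Feeding `φ_n` the maximally entangled matrix placed in a
single component shows that the Choi matrix of each `ψₖ` is positive semidefinite, so by Choi's
theorem `ψₖ` has complex Kraus operators `W⁽ᵏ⁾ᵢ`, and `Vᵢ = W⁽¹⁾ᵢ e₁ + W⁽²⁾ᵢ e₂` are Kraus
operators for `φ`.
-/

open Complex Matrix Kronecker BigOperators

open scoped ComplexOrder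

noncomputable section

/-- Bicomplex scalar multiplication of a bicomplex matrix by a bicomplex number. -/
def bcSmulMat {I J : Type} (z : BC) (A : BCMat I J) : BCMat I J :=
  (z.1 • A.1 - z.2 • A.2, z.1 • A.2 + z.2 • A.1)

/-- `𝔹ℂ`-linearity of a map between bicomplex matrix spaces. -/
def BCLinear {n m : ℕ} (φ : BCMat (Fin n) (Fin n) → BCMat (Fin m) (Fin m)) : Prop :=
  (∀ A B : BCMat (Fin n) (Fin n), φ (A + B) = φ A + φ B) ∧
  (∀ (z : BC) (A : BCMat (Fin n) (Fin n)), φ (bcSmulMat z A) = bcSmulMat z (φ A))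

/-- The block extension `φ_N` of `φ`, applying `φ` to each `n×n` block of an
`N×N` block matrix. -/
def blockExt {n m : ℕ} (φ : BCMat (Fin n) (Fin n) → BCMat (Fin m) (Fin m)) (N : ℕ)
    (A : BCMat (Fin N × Fin n) (Fin N × Fin n)) : BCMat (Fin N × Fin m) (Fin N × Fin m) :=
  (Matrix.of fun p q =>
      (φ (Matrix.of fun a b => A.1 (p.1, a) (q.1, b),
          Matrix.of fun a b => A.2 (p.1, a) (q.1, b))).1 p.2 q.2,
   Matrix.of fun p q =>
      (φ (Matrix.of fun a b => A.1 (p.1, a) (q.1, b),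
          Matrix.of fun a b => A.2 (p.1, a) (q.1, b))).2 p.2 q.2)

/-- `φ` is completely hyperbolic positive if every block extension `φ_N` sends
hyperbolic positive matrices to hyperbolic positive matrices. -/
def CompletelyHypPos {n m : ℕ}
    (φ : BCMat (Fin n) (Fin n) → BCMat (Fin m) (Fin m)) : Prop :=
  ∀ (N : ℕ) (A : BCMat (Fin N × Fin n) (Fin N × Fin n)),
    HypPos A → HypPos (blockExt φ N A)

lemma star_eq_neg_of_mul_self_eq_neg_one {s : ℂ} (hs : s * s = -1) : star s = -s := by
  rcases mul_self_eq_mul_self_iff.mp (hs.trans I_mul_I.symm) with rfl | rfl <;> simp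

lemma posSemidef_of_forall_dotProduct_mulVec_nonneg {n : Type} [Fintype n] [DecidableEq n]
    {M : Matrix n n ℂ} (h : ∀ x : n → ℂ, 0 ≤ star x ⬝ᵥ (M *ᵥ x)) : M.PosSemidef := by
  rw [← Matrix.isPositive_toEuclideanLin_iff, LinearMap.isPositive_iff_complex]
  intro x
  have hx := h x
  have hinner : x.ofLp ⬝ᵥ star (toEuclideanLin M x).ofLp = star x.ofLp ⬝ᵥ (M *ᵥ x.ofLp) := by
    rw [dotProduct_star, dotProduct_comm]
    exact (IsSelfAdjoint.of_nonneg hx).star_eq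
  rw [EuclideanSpace.inner_eq_star_dotProduct, hinner]
  obtain ⟨hre, him⟩ := Complex.nonneg_iff.mp hx
  exact ⟨Complex.ext rfl (by simp [him]), hre⟩

section IdempotentParts

variable {M : Type*} [AddCommGroup M] [Module ℂ M] {s : ℂ}

/-- For a square root `s` of `-1`, the idempotent component `x₁ + s x₂` of `x₁ + j x₂`;
`idem1` and `idem2` are the cases `s = -i` and `s = i`. -/
def idemPart (s : ℂ) : M × M →ₗ[ℂ] M := LinearMap.fst ℂ M M + s • LinearMap.snd ℂ M M

/-- `x ↦ x e`, where `e = (1 - s j) / 2` is the idempotent whose `s`-component is `1` and whose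
`-s`-component is `0`. -/
def idemEmbed (s : ℂ) : M →ₗ[ℂ] M × M :=
  LinearMap.prod ((2 : ℂ)⁻¹ • LinearMap.id) ((-s / 2) • LinearMap.id)

@[simp] lemma idemPart_apply (x : M × M) : idemPart s x = x.1 + s • x.2 := rfl

@[simp] lemma idemEmbed_apply (x : M) : idemEmbed s x = ((2 : ℂ)⁻¹ • x, (-s / 2) • x) := rfl

lemma idemPart_idemEmbed (hs : s * s = -1) (x : M) : idemPart s (idemEmbed s x) = x := by
  rw [idemEmbed_apply, idemPart_apply, smul_smul, ← add_smul]
  linear_combination (norm := module) hs • (-(2 : ℂ)⁻¹ • x)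

lemma idemPart_neg_idemEmbed (hs : s * s = -1) (x : M) : idemPart (-s) (idemEmbed s x) = 0 := by
  rw [idemEmbed_apply, idemPart_apply, smul_smul, ← add_smul]
  linear_combination (norm := module) hs • ((2 : ℂ)⁻¹ • x)

lemma idemPart_idemEmbed_neg (hs : s * s = -1) (x : M) : idemPart s (idemEmbed (-s) x) = 0 := by
  simpa using idemPart_neg_idemEmbed (s := -s) (by rwa [neg_mul_neg]) x

lemma idemEmbed_add_idemEmbed_neg (hs : s * s = -1) (x : M × M) :
    idemEmbed s (idemPart s x) + idemEmbed (-s) (idemPart (-s) x) = x := by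
  ext <;> simp only [idemEmbed_apply, idemPart_apply, Prod.fst_add, Prod.snd_add, smul_add,
    smul_smul]
  · module
  · linear_combination (norm := module) hs • (-x.2)

lemma ext_idemPart (hs : s * s = -1) {x y : M × M} (h : idemPart s x = idemPart s y)
    (h' : idemPart (-s) x = idemPart (-s) y) : x = y := by
  rw [← idemEmbed_add_idemEmbed_neg hs x, ← idemEmbed_add_idemEmbed_neg hs y, h, h']

end IdempotentParts

section Bicomplex

variable {s : ℂ}

lemma idem1_eq_idemPart (z : BC) : idem1 z = idemPart (-I) z := by
  simp [idem1, sub_eq_add_neg]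

lemma idem2_eq_idemPart (z : BC) : idem2 z = idemPart I z := rfl

lemma idemPart_bcMul (hs : s * s = -1) (z w : BC) :
    idemPart s (bcMul z w) = idemPart s z * idemPart s w := by
  simp only [bcMul, idemPart_apply, smul_eq_mul]
  linear_combination (-(z.2 * w.2)) * hs

lemma idemPart_bcStar (hs : s * s = -1) (z : BC) :
    idemPart s (bcStar z) = star (idemPart s z) := by
  simp [bcStar, star_eq_neg_of_mul_self_eq_neg_one hs]

lemma idemPart_bmul (hs : s * s = -1) {l m n : Type} [Fintype m] (A : BCMat l m) (B : BCMat m n) :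
    idemPart s (bmul A B) = idemPart s A * idemPart s B := by
  simp only [bmul, idemPart_apply, Matrix.add_mul, Matrix.mul_add, Matrix.smul_mul,
    Matrix.mul_smul]
  linear_combination (norm := module) hs • (-(A.2 * B.2))

lemma idemPart_bcStarT (hs : s * s = -1) {m n : Type} (A : BCMat m n) :
    idemPart s (bcStarT A) = (idemPart s A)ᴴ := by
  simp [bcStarT, star_eq_neg_of_mul_self_eq_neg_one hs]

lemma idemPart_bcSmulMat (hs : s * s = -1) {m n : Type} (z : BC) (A : BCMat m n) :
    idemPart s (bcSmulMat z A) = idemPart s z • idemPart s A := by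
  simp only [bcSmulMat, idemPart_apply, smul_eq_mul, add_smul, smul_add, smul_smul]
  linear_combination (norm := module) hs • (-(z.2 • A.2))

lemma bcSmulMat_ofComplex {m n : Type} (c : ℂ) (A : BCMat m n) : bcSmulMat (c, 0) A = c • A := by
  simp [bcSmulMat, Prod.smul_def]

lemma bcSmulMat_idemEmbed_one (hs : s * s = -1) {m n : Type} (A : BCMat m n) :
    bcSmulMat (idemEmbed s 1) A = idemEmbed s (idemPart s A) := by
  ext i j <;> simp only [bcSmulMat, idemEmbed_apply, idemPart_apply,
    Matrix.sub_apply, Matrix.add_apply, Matrix.smul_apply, smul_eq_mul, smul_add, mul_one]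
  · ring
  · linear_combination (A.2 i j / 2) * hs

lemma idemPart_quadForm (hs : s * s = -1) {n : Type} [Fintype n] (A : BCMat n n) (c : n → BC) :
    idemPart s (quadForm A c) =
      star (fun j => idemPart s (c j)) ⬝ᵥ (idemPart s A *ᵥ fun j => idemPart s (c j)) := by
  simp only [quadForm, map_sum, idemPart_bcMul hs, idemPart_bcStar hs, dotProduct, mulVec,
    Finset.mul_sum, Pi.star_apply]
  refine Finset.sum_congr rfl fun j _ => Finset.sum_congr rfl fun k _ => ?_
  simp [bcEntry]

lemma inDplus_iff_forall_idemPart_nonneg (z : BC) :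
    inDplus z ↔ ∀ s : ℂ, s * s = -1 → 0 ≤ idemPart s z := by
  have hroots : ∀ s : ℂ, s * s = -1 ↔ s = I ∨ s = -I := fun s => by
    rw [← mul_self_eq_mul_self_iff, I_mul_I]
  simp only [hroots, or_imp, forall_and, forall_eq, inDplus, Complex.nonneg_iff,
    ← idem2_eq_idemPart, ← idem1_eq_idemPart, eq_comm (a := (0 : ℝ))]
  tauto

lemma hypPos_iff_forall_posSemidef_idemPart {n : Type} [Fintype n] [DecidableEq n]
    (A : BCMat n n) : HypPos A ↔ ∀ s : ℂ, s * s = -1 → (idemPart s A).PosSemidef := by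
  simp only [HypPos, inDplus_iff_forall_idemPart_nonneg]
  constructor
  · intro hA s hs
    refine posSemidef_of_forall_dotProduct_mulVec_nonneg fun x => ?_
    have hx : (fun j => idemPart s (idemEmbed s (x j))) = x :=
      funext fun j => idemPart_idemEmbed hs (x j)
    simpa only [idemPart_quadForm hs, hx] using hA (fun j => idemEmbed s (x j)) s hs
  · intro hA c s hs
    rw [idemPart_quadForm hs]
    exact (hA s hs).dotProduct_mulVec_nonneg _

end Bicomplex

namespace BCLinear

variable {n m : ℕ} {φ : BCMat (Fin n) (Fin n) → BCMat (Fin m) (Fin m)} {s : ℂ}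

def toLinearMap (hφ : BCLinear φ) : BCMat (Fin n) (Fin n) →ₗ[ℂ] BCMat (Fin m) (Fin m) where
  toFun := φ
  map_add' := hφ.1
  map_smul' c A := by
    rw [RingHom.id_apply, ← bcSmulMat_ofComplex, ← bcSmulMat_ofComplex]
    exact hφ.2 (c, 0) A

def idemMap (hφ : BCLinear φ) (s : ℂ) : Matrix (Fin n) (Fin n) ℂ →ₗ[ℂ] Matrix (Fin m) (Fin m) ℂ :=
  idemPart s ∘ₗ hφ.toLinearMap ∘ₗ idemEmbed s

lemma idemPart_map (hφ : BCLinear φ) (hs : s * s = -1) (A : BCMat (Fin n) (Fin n)) :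
    idemPart s (φ A) = hφ.idemMap s (idemPart s A) := by
  have hunit : idemPart s (idemEmbed s (1 : ℂ)) = 1 := idemPart_idemEmbed hs 1
  calc idemPart s (φ A) = idemPart s (bcSmulMat (idemEmbed s 1) (φ A)) := by
        rw [idemPart_bcSmulMat hs, hunit, one_smul]
    _ = idemPart s (φ (idemEmbed s (idemPart s A))) := by
        rw [← hφ.2, bcSmulMat_idemEmbed_one hs]

lemma idemPart_blockExt (hφ : BCLinear φ) (hs : s * s = -1) (N : ℕ)
    (A : BCMat (Fin N × Fin n) (Fin N × Fin n)) (p q : Fin N × Fin m) :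
    idemPart s (blockExt φ N A) p q =
      hφ.idemMap s (Matrix.of fun a b => idemPart s A (p.1, a) (q.1, b)) p.2 q.2 := by
  have hblock : (Matrix.of fun a b => idemPart s A (p.1, a) (q.1, b)) =
      idemPart s (Matrix.of fun a b => A.1 (p.1, a) (q.1, b),
        Matrix.of fun a b => A.2 (p.1, a) (q.1, b)) := by
    ext; simp
  rw [hblock, ← idemPart_map hφ hs]
  simp [blockExt]

end BCLinear

section Choi

variable {ι n m : Type*} [Fintype ι] [Fintype n]

def choiMatrix [DecidableEq n] (ψ : Matrix n n ℂ →ₗ[ℂ] Matrix m m ℂ) :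
    Matrix (n × m) (n × m) ℂ :=
  Matrix.of fun p q => ψ (Matrix.single p.1 q.1 1) p.2 q.2

def krausMap (W : ι → Matrix m n ℂ) : Matrix n n ℂ →ₗ[ℂ] Matrix m m ℂ where
  toFun A := ∑ k, W k * A * (W k)ᴴ
  map_add' A B := by simp only [Matrix.mul_add, Matrix.add_mul, Finset.sum_add_distrib]
  map_smul' c A := by
    simp only [Matrix.mul_smul, Matrix.smul_mul, Finset.smul_sum, RingHom.id_apply]

lemma krausMap_apply (W : ι → Matrix m n ℂ) (A : Matrix n n ℂ) :
    krausMap W A = ∑ k, W k * A * (W k)ᴴ := rfl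

variable [DecidableEq n]

lemma choiMatrix_injective : Function.Injective (choiMatrix (n := n) (m := m)) := by
  intro ψ ψ' h
  refine Matrix.ext_linearMap ℂ fun a b => LinearMap.ext_ring ?_
  ext x y
  exact congrFun (congrFun h (a, x)) (b, y)

lemma choiMatrix_krausMap [Fintype m] (W : ι → Matrix m n ℂ) :
    choiMatrix (krausMap W) = (Matrix.of fun k (p : n × m) => star (W k p.2 p.1))ᴴ *
      Matrix.of fun k (p : n × m) => star (W k p.2 p.1) := by
  ext p q
  simp [choiMatrix, krausMap_apply, Matrix.mul_apply, Matrix.single_apply, Matrix.sum_apply,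
    ite_and]

theorem exists_krausMap_eq_of_posSemidef_choiMatrix [Fintype m]
    {ψ : Matrix n n ℂ →ₗ[ℂ] Matrix m m ℂ}
    (hψ : (choiMatrix ψ).PosSemidef) : ∃ W : n × m → Matrix m n ℂ, ψ = krausMap W := by
  classical
  obtain ⟨B, hB⟩ : ∃ B : Matrix (n × m) (n × m) ℂ, choiMatrix ψ = star B * B := by
    open scoped MatrixOrder in exact CStarAlgebra.nonneg_iff_eq_star_mul_self.mp hψ.nonneg
  refine ⟨fun k => Matrix.of fun x a => star (B k (a, x)), choiMatrix_injective ?_⟩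
  rw [hB, choiMatrix_krausMap]
  simp only [Matrix.of_apply, star_star, Matrix.star_eq_conjTranspose]
  rfl

end Choi

lemma BCLinear.posSemidef_choiMatrix_idemMap {n m : ℕ}
    {φ : BCMat (Fin n) (Fin n) → BCMat (Fin m) (Fin m)} (hφ : BCLinear φ)
    (hcp : CompletelyHypPos φ) {s : ℂ} (hs : s * s = -1) :
    (choiMatrix (hφ.idemMap s)).PosSemidef := by
  let v : Fin n × Fin n → ℂ := fun p => if p.1 = p.2 then 1 else 0
  have hblock : ∀ a b : Fin n,
      (Matrix.of fun i k => vecMulVec v (star v) (a, i) (b, k)) = Matrix.single a b 1 := by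
    intro a b
    ext i k
    by_cases hi : a = i <;> by_cases hk : b = k <;> simp [v, vecMulVec_apply, hi, hk]
  have hpos : HypPos (idemEmbed s (vecMulVec v (star v))) := by
    refine (hypPos_iff_forall_posSemidef_idemPart _).mpr fun t ht => ?_
    rcases mul_self_eq_mul_self_iff.mp (ht.trans hs.symm) with rfl | rfl
    · rw [idemPart_idemEmbed hs]
      exact posSemidef_vecMulVec_self_star v
    · rw [idemPart_neg_idemEmbed hs]
      exact PosSemidef.zero
  have hout := (hypPos_iff_forall_posSemidef_idemPart _).mp (hcp n _ hpos) s hs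
  convert hout using 1
  ext p q
  rw [hφ.idemPart_blockExt hs, idemPart_idemEmbed hs, hblock]
  rfl

lemma idemPart_sum_bmul_bcStarT {ι : Type*} {m n : Type} [Fintype ι] [Fintype n] {s : ℂ}
    (hs : s * s = -1) (V : ι → BCMat m n) (A : BCMat n n) :
    idemPart s (∑ k, bmul (bmul (V k) A) (bcStarT (V k))) =
      krausMap (fun k => idemPart s (V k)) (idemPart s A) := by
  simp only [map_sum, idemPart_bmul hs, idemPart_bcStarT hs, krausMap_apply]

/-- bicomplex Choi theorem: every `𝔹ℂ`-linear completely
hyperbolic positive map has a bicomplex Kraus decomposition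
`φ(A) = Σᵢ Vᵢ·A·(Vᵢ*)ᵗ`; that is, `φ` is a finite bicomplex quantum channel. -/
theorem bicomplex_choi {n m : ℕ}
    (φ : BCMat (Fin n) (Fin n) → BCMat (Fin m) (Fin m))
    (hφ : BCLinear φ) (hcp : CompletelyHypPos φ) :
    ∃ (r : ℕ) (V : Fin r → BCMat (Fin m) (Fin n)),
      ∀ A : BCMat (Fin n) (Fin n),
        φ A = ∑ i, bmul (bmul (V i) A) (bcStarT (V i)) := by
  have hI : I * I = -1 := I_mul_I
  have hnegI : -I * -I = -1 := by rw [neg_mul_neg, I_mul_I]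
  obtain ⟨W, hW⟩ :=
    exists_krausMap_eq_of_posSemidef_choiMatrix (hφ.posSemidef_choiMatrix_idemMap hcp hI)
  obtain ⟨W', hW'⟩ :=
    exists_krausMap_eq_of_posSemidef_choiMatrix (hφ.posSemidef_choiMatrix_idemMap hcp hnegI)
  let e := Fintype.equivFin (Fin n × Fin m)
  let V k := idemEmbed I (W k) + idemEmbed (-I) (W' k)
  refine ⟨_, fun i => V (e.symm i), fun A => ?_⟩
  rw [e.symm.sum_comp (fun k => bmul (bmul (V k) A) (bcStarT (V k)))]
  refine ext_idemPart hI ?_ ?_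
  · rw [hφ.idemPart_map hI, hW, idemPart_sum_bmul_bcStarT hI]
    simp only [V, map_add, idemPart_idemEmbed hI, idemPart_idemEmbed_neg hI, add_zero]
  · rw [hφ.idemPart_map hnegI, hW', idemPart_sum_bmul_bcStarT hnegI]
    simp only [V, map_add, idemPart_idemEmbed hnegI, idemPart_neg_idemEmbed hI, zero_add]

end
end

section
/- Let φ : 𝔹ℂ^{n×n} → 𝔹ℂ^{m×m} and ψ : 𝔹ℂ^{ℓ×ℓ} → 𝔹ℂ^{p×p} be maps of Kraus form, i.e. φ(A) = Σ_{i=1}^{r} Vᵢ·A·(Vᵢ*)ᵗ and ψ(B) = Σ_{k=1}^{s} W_k·B·(W_k*)ᵗ for some Vᵢ ∈ 𝔹ℂ^{m×n} and W_k ∈ 𝔹ℂ^{p×ℓ}. Then for all A ∈ 𝔹ℂ^{n×n} and B ∈ 𝔹ℂ^{ℓ×ℓ}, φ(A) ⊗ⱼ ψ(B) = Σ_{i=1}^{r} Σ_{k=1}^{s} (Vᵢ ⊗ⱼ W_k)·(A ⊗ⱼ B)·((Vᵢ ⊗ⱼ W_k)*)ᵗ; in particular the bicomplex tensor product of two maps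 of Kraus form is again of Kraus form. -/
open Complex Matrix Kronecker BigOperators

open scoped ComplexOrder

noncomputable section

lemma kron_sub_left {I J K L : Type} (A B : Matrix I J ℂ) (C : Matrix K L ℂ) :
    (A - B) ⊗ₖ C = A ⊗ₖ C - B ⊗ₖ C := by
  ext ⟨i, k⟩ ⟨j, l⟩
  simp [Matrix.kroneckerMap_apply, Matrix.sub_apply, sub_mul]

lemma kron_sub_right {I J K L : Type} (A : Matrix I J ℂ) (B C : Matrix K L ℂ) :
    A ⊗ₖ (B - C) = A ⊗ₖ B - A ⊗ₖ C := by
  ext ⟨i, k⟩ ⟨j, l⟩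
  simp [Matrix.kroneckerMap_apply, Matrix.sub_apply, mul_sub]

lemma kron_conjTranspose {I J K L : Type} (A : Matrix I J ℂ) (B : Matrix K L ℂ) :
    (A ⊗ₖ B)ᴴ = Aᴴ ⊗ₖ Bᴴ := by
  ext ⟨i, k⟩ ⟨j, l⟩
  simp [Matrix.kroneckerMap_apply, Matrix.conjTranspose_apply, _root_.map_mul]

lemma sum_kron {I J K L ι : Type} [Fintype ι] (f : ι → Matrix I J ℂ) (B : Matrix K L ℂ) :
    (∑ i, f i) ⊗ₖ B = ∑ i, f i ⊗ₖ B := by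
  ext ⟨i, k⟩ ⟨j, l⟩
  simp [Matrix.kroneckerMap_apply, Matrix.sum_apply, Finset.sum_mul]

lemma kron_sum {I J K L ι : Type} [Fintype ι] (A : Matrix I J ℂ) (g : ι → Matrix K L ℂ) :
    A ⊗ₖ (∑ i, g i) = ∑ i, A ⊗ₖ g i := by
  ext ⟨i, k⟩ ⟨j, l⟩
  simp [Matrix.kroneckerMap_apply, Matrix.sum_apply, Finset.mul_sum]

lemma fst_sum {I J ι : Type} [Fintype ι] (f : ι → BCMat I J) :
    (∑ i, f i).1 = ∑ i, (f i).1 :=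
  Prod.fst_sum

lemma snd_sum {I J ι : Type} [Fintype ι] (f : ι → BCMat I J) :
    (∑ i, f i).2 = ∑ i, (f i).2 :=
  Prod.snd_sum

/-- `bkron` of finite sums is the double sum of `bkron`s. -/
lemma bkron_sum_sum {I J K L ι κ : Type} [Fintype ι] [Fintype κ]
    (f : ι → BCMat I J) (g : κ → BCMat K L) :
    bkron (∑ i, f i) (∑ k, g k) = ∑ i, ∑ k, bkron (f i) (g k) := by
  unfold bkron
  ext1
  · simp only [fst_sum, snd_sum, sum_kron, kron_sum, ← Finset.sum_sub_distrib]
    exact Finset.sum_comm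
  · simp only [fst_sum, snd_sum, sum_kron, kron_sum, ← Finset.sum_add_distrib]
    exact Finset.sum_comm

/-- `bkron` intertwines bicomplex matrix multiplication. -/
lemma bkron_bmul {I J K I' J' K' : Type} [Fintype J] [Fintype J']
    (A : BCMat I J) (B : BCMat J K) (C : BCMat I' J') (D : BCMat J' K') :
    bkron (bmul A B) (bmul C D) = bmul (bkron A C) (bkron B D) := by
  unfold bkron bmul
  ext1
  · simp only [kron_sub_left, kron_sub_right, Matrix.add_kronecker, Matrix.kronecker_add,
      ← Matrix.mul_kronecker_mul, Matrix.sub_mul, Matrix.mul_sub, Matrix.add_mul,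
      Matrix.mul_add]
    abel
  · simp only [kron_sub_left, kron_sub_right, Matrix.add_kronecker, Matrix.kronecker_add,
      ← Matrix.mul_kronecker_mul, Matrix.sub_mul, Matrix.mul_sub, Matrix.add_mul,
      Matrix.mul_add]
    abel

/-- `bcStarT` intertwines `bkron`. -/
lemma bcStarT_bkron {I J K L : Type} (A : BCMat I J) (B : BCMat K L) :
    bcStarT (bkron A B) = bkron (bcStarT A) (bcStarT B) := by
  unfold bkron bcStarT
  ext1
  · simp only [Matrix.conjTranspose_sub, kron_conjTranspose,
      Matrix.kroneckerMap_map_left, Matrix.kroneckerMap_map_right]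
    ext ⟨i, k⟩ ⟨j, l⟩
    simp [Matrix.kroneckerMap_apply, Matrix.conjTranspose_apply, mul_comm]
  · ext ⟨i, k⟩ ⟨j, l⟩
    simp [Matrix.kroneckerMap_apply, Matrix.conjTranspose_apply]
    ring

/-- the bicomplex tensor product of two maps of Kraus form is of
Kraus form: `φ(A) ⊗ⱼ ψ(B) = Σᵢ Σₖ (Vᵢ ⊗ⱼ Wₖ)·(A ⊗ⱼ B)·((Vᵢ ⊗ⱼ Wₖ)*)ᵗ`. -/
theorem bkron_kraus {n m l p r s : ℕ}
    (V : Fin r → BCMat (Fin m) (Fin n)) (W : Fin s → BCMat (Fin p) (Fin l))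
    (A : BCMat (Fin n) (Fin n)) (B : BCMat (Fin l) (Fin l)) :
    bkron (∑ i, bmul (bmul (V i) A) (bcStarT (V i)))
          (∑ k, bmul (bmul (W k) B) (bcStarT (W k))) =
      ∑ i, ∑ k,
        bmul (bmul (bkron (V i) (W k)) (bkron A B)) (bcStarT (bkron (V i) (W k))) := by
  rw [bkron_sum_sum]
  refine Finset.sum_congr rfl fun i _ => Finset.sum_congr rfl fun k _ => ?_
  rw [bkron_bmul, bkron_bmul, bcStarT_bkron]

end
end
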